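/- Let X be a metric space, Y a normed vector space, F₁, F₂ : X ⇒ Y and (x̄, ȳ) ∈ Graph F₁ ∩ Graph F₂. Assume: (i) Graph F₁, Graph F₂ are locally complete around (x̄, ȳ); (ii) F₁ is metrically regular around (x̄, ȳ) with constant l > 0; (iii) F₂ has the Aubin property around (x̄, ȳ) with constant m > 0; (iv) lm < 1. Then there exist α, β > 0 such that for every x ∈ B(x̄, α), d(x, Fix(F₁⁻¹F₂)) ≤ (l⁻¹ − m)⁻¹ · d(F₁(x) ∩ B(ȳ, β), F₂(x)), where Fix(F₁⁻¹F₂) := {x ∈ X : F₁(x) ∩ F₂(x) ≠ ∅} and d(A, B) := inf{‖a − b‖ : a ∈ A, b ∈ B}. -/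

import Mathlib

open Metric Set Filter Topology ENNReal

noncomputable def exc {α : Type*} [PseudoEMetricSpace α] (A B : Set α) : ℝ≥0∞ :=
  ⨆ a ∈ A, EMetric.infEdist a B

noncomputable def setDist2 {α : Type*} [PseudoEMetricSpace α] (A B : Set α) : ℝ≥0∞ :=
  ⨅ a ∈ A, EMetric.infEdist a B

/-!
Start from `y ∈ F₁ x` near `y₀` and `c ∈ F₂ x` with `dist y c` close to
`d(F₁ x ∩ B(y₀, β), F₂ x)`, and iterate: metric regularity of `F₁` moves the base point `a` to
some `a'` with `c ∈ F₁ a'` at cost about `l · dist y c`, then the Aubin property of `F₂` yields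
`c' ∈ F₂ a'` with `dist c c' ≤ m · dist a a'`. The gaps shrink by the factor `l m < 1`, so the
iterates are Cauchy and, by local completeness of the graphs, converge to a coincidence point at
distance at most `l · dist y c / (1 - l m) = (l⁻¹ - m)⁻¹ · dist y c` from `x`. Slightly larger
constants `k > l` and `T > dist y c` make every infimum attained up to slack, and are let tend to
`l` and to the distance at the end. Points `x` already within that bound of `x₀` are handled by
the coincidence point `x₀` itself; for the others the bound is small, which keeps the iteration
inside the neighbourhoods where the hypotheses hold.
-/

theorem IsComplete.inter_isClosed {α : Type*} [UniformSpace α] {s t : Set α}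
    (hs : IsComplete s) (ht : IsClosed t) : IsComplete (s ∩ t) := by
  intro f hf hst
  have : f.NeBot := hf.1
  obtain ⟨x, hxs, hx⟩ := hs f hf (hst.trans (principal_mono.2 inter_subset_left))
  exact ⟨x, ⟨hxs, ht.mem_of_tendsto hx (le_principal_iff.1 <| hst.trans <|
    principal_mono.2 inter_subset_right)⟩, hx⟩

theorem IsComplete.inter_closedBall_of_le {α : Type*} [PseudoMetricSpace α] {s : Set α} {a : α}
    {r ρ : ℝ} (hs : IsComplete (s ∩ closedBall a r)) (hρ : ρ ≤ r) :
    IsComplete (s ∩ closedBall a ρ) := by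
  rw [← inter_eq_right.2 (closedBall_subset_closedBall hρ), ← inter_assoc]
  exact hs.inter_isClosed isClosed_closedBall

theorem mul_geom_sum_le_div {q c : ℝ} (hq₀ : 0 ≤ q) (hq₁ : q < 1) (hc : 0 ≤ c) (n : ℕ) :
    c * ∑ i ∈ Finset.range n, q ^ i ≤ c / (1 - q) := by
  have := geom_sum_Ico_le_of_lt_one (m := 0) (n := n) hq₀ hq₁
  rw [← Finset.range_eq_Ico, pow_zero] at this
  calc c * ∑ i ∈ Finset.range n, q ^ i ≤ c * (1 / (1 - q)) := by gcongr
    _ = c / (1 - q) := mul_one_div c (1 - q)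

theorem exists_seq_of_forall_exists_succ {σ : Type*} {P : ℕ → σ → Prop}
    {R : ℕ → σ → σ → Prop} {s₀ : σ} (h₀ : P 0 s₀)
    (step : ∀ n s, P n s → ∃ s', P (n + 1) s' ∧ R n s s') :
    ∃ f : ℕ → σ, f 0 = s₀ ∧ (∀ n, P n (f n)) ∧ ∀ n, R n (f n) (f (n + 1)) := by
  choose! g hgP hgR using step
  let f : ℕ → σ := fun n => Nat.rec s₀ g n
  have hf : ∀ n, P n (f n) := fun n => by
    induction n with
    | zero => exact h₀
    | succ n ih => exact hgP n _ ih
  exact ⟨f, rfl, hf, fun n => hgR n _ (hf n)⟩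

theorem le_exc {α : Type*} [PseudoEMetricSpace α] {A B : Set α} {a : α} (ha : a ∈ A) :
    infEDist a B ≤ exc A B :=
  le_iSup₂ (f := fun a _ => infEDist a B) a ha

theorem exc_mono_left {α : Type*} [PseudoEMetricSpace α] {A A' B : Set α} (h : A ⊆ A') :
    exc A B ≤ exc A' B :=
  biSup_mono fun _ ha => h ha

theorem exists_dist_lt_of_setDist2_lt {α : Type*} [PseudoMetricSpace α] {A B : Set α} {r : ℝ}
    (h : setDist2 A B < ENNReal.ofReal r) : ∃ a ∈ A, ∃ b ∈ B, dist a b < r := by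
  simp only [setDist2, iInf_lt_iff] at h
  obtain ⟨a, ha, hab⟩ := h
  obtain ⟨b, hb, hd⟩ := infEDist_lt_iff.1 hab
  exact ⟨a, ha, b, hb, edist_lt_ofReal.1 hd⟩

section SetValued

variable {X Y : Type*} [PseudoMetricSpace X] [PseudoMetricSpace Y]

def MetricallyRegularOn (F : X → Set Y) (l : ℝ) (U : Set X) (V : Set Y) : Prop :=
  ∀ x ∈ U, ∀ y ∈ V, infEDist x {x' | y ∈ F x'} ≤ ENNReal.ofReal l * infEDist y (F x)

def AubinOn (F : X → Set Y) (m : ℝ) (U : Set X) (V : Set Y) : Prop :=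
  ∀ x ∈ U, ∀ u ∈ U, exc (F x ∩ V) (F u) ≤ ENNReal.ofReal (m * dist x u)

variable {F F₁ F₂ : X → Set Y} {U U' : Set X} {V V' : Set Y} {l m k T : ℝ}

theorem MetricallyRegularOn.mono (h : MetricallyRegularOn F l U V) (hU : U' ⊆ U) (hV : V' ⊆ V) :
    MetricallyRegularOn F l U' V' :=
  fun x hx y hy => h x (hU hx) y (hV hy)

theorem AubinOn.mono (h : AubinOn F m U V) (hU : U' ⊆ U) (hV : V' ⊆ V) : AubinOn F m U' V' :=
  fun x hx u hu => (exc_mono_left (inter_subset_inter_right _ hV)).trans (h x (hU hx) u (hU hu))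

theorem MetricallyRegularOn.exists_dist_lt (h : MetricallyRegularOn F l U V) (hl : 0 ≤ l)
    (hlk : l < k) {t : ℝ} (ht : 0 < t) {x : X} {y y' : Y} (hx : x ∈ U) (hy' : y' ∈ V)
    (hy : y ∈ F x) (hyy' : dist y y' ≤ t) : ∃ x', y' ∈ F x' ∧ dist x x' < k * t := by
  have : infEDist x {x' | y' ∈ F x'} < ENNReal.ofReal (k * t) := calc
    _ ≤ ENNReal.ofReal l * infEDist y' (F x) := h x hx y' hy'
    _ ≤ ENNReal.ofReal l * ENNReal.ofReal t := by
      gcongr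
      refine (infEDist_le_edist_of_mem hy).trans ?_
      rw [edist_dist, dist_comm]
      exact ENNReal.ofReal_le_ofReal hyy'
    _ = ENNReal.ofReal (l * t) := (ENNReal.ofReal_mul hl).symm
    _ < ENNReal.ofReal (k * t) := by
      rw [ENNReal.ofReal_lt_ofReal_iff (by nlinarith)]
      gcongr
  obtain ⟨x', hx', hd⟩ := infEDist_lt_iff.1 this
  exact ⟨x', hx', edist_lt_ofReal.1 hd⟩

theorem AubinOn.exists_dist_lt (h : AubinOn F m U V) (hm : 0 < m) {x x' : X} {y : Y} {s : ℝ}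
    (hx : x ∈ U) (hx' : x' ∈ U) (hy : y ∈ F x) (hyV : y ∈ V) (hxx' : dist x x' < s) :
    ∃ y' ∈ F x', dist y y' < m * s := by
  have : infEDist y (F x') < ENNReal.ofReal (m * s) := calc
    _ ≤ exc (F x ∩ V) (F x') := le_exc ⟨hy, hyV⟩
    _ ≤ ENNReal.ofReal (m * dist x x') := h x hx x' hx'
    _ < ENNReal.ofReal (m * s) := by
      rw [ENNReal.ofReal_lt_ofReal_iff (by nlinarith [dist_nonneg (x := x) (y := x')])]
      gcongr
  obtain ⟨y', hy', hd⟩ := infEDist_lt_iff.1 this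
  exact ⟨y', hy', edist_lt_ofReal.1 hd⟩

/-- `p = (a, b, c)` is a state after `n` steps of the iteration started at `(x, y)`; a step
is `(a, b, c) ↦ (a', c, c')`. -/
structure IsIterate (F₁ F₂ : X → Set Y) (k m T : ℝ) (x : X) (y : Y) (n : ℕ) (p : X × Y × Y) :
    Prop where
  mem₁ : p.2.1 ∈ F₁ p.1
  mem₂ : p.2.2 ∈ F₂ p.1
  dist_le : dist p.2.1 p.2.2 ≤ T * (k * m) ^ n
  dist_fst_le : dist x p.1 ≤ k * T * ∑ i ∈ Finset.range n, (k * m) ^ i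
  dist_snd_fst_le : dist y p.2.1 ≤ T * ∑ i ∈ Finset.range n, (k * m) ^ i

variable {x : X} {y : Y} {n : ℕ} {p : X × Y × Y}

theorem IsIterate.dist_snd_snd_le (hp : IsIterate F₁ F₂ k m T x y n p) :
    dist y p.2.2 ≤ T * ∑ i ∈ Finset.range (n + 1), (k * m) ^ i := by
  rw [Finset.sum_range_succ, mul_add]
  linarith [dist_triangle y p.2.1 p.2.2, hp.dist_snd_fst_le, hp.dist_le]

theorem IsIterate.exists_succ (hreg : MetricallyRegularOn F₁ l U V) (hAub : AubinOn F₂ m U V)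
    (hl : 0 ≤ l) (hm : 0 < m) (hlk : l < k) (hkm : k * m < 1) (hT : 0 < T)
    (hU : closedBall x (k * T / (1 - k * m)) ⊆ U) (hV : closedBall y (T / (1 - k * m)) ⊆ V)
    (hp : IsIterate F₁ F₂ k m T x y n p) :
    ∃ p', IsIterate F₁ F₂ k m T x y (n + 1) p' ∧ p'.2.1 = p.2.2 ∧
      dist p.1 p'.1 ≤ k * T * (k * m) ^ n := by
  have hk : 0 < k := hl.trans_lt hlk
  have hq : 0 ≤ k * m := by positivity
  have hpU : p.1 ∈ U := hU <| mem_closedBall'.2 <|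
    hp.dist_fst_le.trans (mul_geom_sum_le_div hq hkm (by positivity) n)
  have hpV : p.2.2 ∈ V := hV <| mem_closedBall'.2 <|
    hp.dist_snd_snd_le.trans (mul_geom_sum_le_div hq hkm hT.le _)
  obtain ⟨a', ha', hda'⟩ :=
    hreg.exists_dist_lt hl hlk (by positivity) hpU hpV hp.mem₁ hp.dist_le
  have hxa' : dist x a' ≤ k * T * ∑ i ∈ Finset.range (n + 1), (k * m) ^ i := by
    rw [Finset.sum_range_succ, mul_add]
    linarith [dist_triangle x p.1 a', hp.dist_fst_le]
  have ha'U : a' ∈ U := hU <| mem_closedBall'.2 <|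
    hxa'.trans (mul_geom_sum_le_div hq hkm (by positivity) _)
  obtain ⟨c', hc', hdc'⟩ := hAub.exists_dist_lt hm hpU ha'U hp.mem₂ hpV hda'
  refine ⟨(a', p.2.2, c'), ⟨ha', hc', ?_, hxa', hp.dist_snd_snd_le⟩, rfl,
    hda'.le.trans_eq (by ring)⟩
  calc dist p.2.2 c' ≤ m * (k * (T * (k * m) ^ n)) := hdc'.le
    _ = T * (k * m) ^ (n + 1) := by ring

theorem exists_coincidence_dist_le (hreg : MetricallyRegularOn F₁ l U V)
    (hAub : AubinOn F₂ m U V) (hc₁ : IsComplete ({p : X × Y | p.2 ∈ F₁ p.1} ∩ U ×ˢ V))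
    (hc₂ : IsClosed ({p : X × Y | p.2 ∈ F₂ p.1} ∩ U ×ˢ V))
    (hl : 0 ≤ l) (hm : 0 < m) (hlk : l < k) (hkm : k * m < 1) (hT : 0 < T)
    (hU : closedBall x (k * T / (1 - k * m)) ⊆ U) (hV : closedBall y (T / (1 - k * m)) ⊆ V)
    {c : Y} (hy : y ∈ F₁ x) (hc : c ∈ F₂ x) (hyc : dist y c ≤ T) :
    ∃ z, (F₁ z ∩ F₂ z).Nonempty ∧ dist x z ≤ k * T / (1 - k * m) := by
  have h₀ : IsIterate F₁ F₂ k m T x y 0 (x, y, c) :=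
    ⟨hy, hc, by simpa using hyc, by simp, by simp⟩
  obtain ⟨f, hf₀, hf, hfR⟩ := exists_seq_of_forall_exists_succ h₀
    fun n p hp => hp.exists_succ hreg hAub hl hm hlk hkm hT hU hV
  have hq : 0 ≤ k * m := by nlinarith
  have hU' : ∀ n, (f n).1 ∈ U := fun n => hU <| mem_closedBall'.2 <|
    (hf n).dist_fst_le.trans (mul_geom_sum_le_div hq hkm (by nlinarith) n)
  have hV' : ∀ n, (f n).2.1 ∈ V := fun n => hV <| mem_closedBall'.2 <|
    (hf n).dist_snd_fst_le.trans (mul_geom_sum_le_div hq hkm hT.le n)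
  have hda : ∀ n, dist (f n).1 (f (n + 1)).1 ≤ k * T * (k * m) ^ n := fun n => (hfR n).2
  have hdb : ∀ n, dist (f n).2.1 (f (n + 1)).2.1 ≤ T * (k * m) ^ n :=
    fun n => (hfR n).1 ▸ (hf n).dist_le
  obtain ⟨P, hP₁, hP⟩ := cauchySeq_tendsto_of_isComplete hc₁
    (fun n => ⟨(hf n).mem₁, hU' n, hV' n⟩)
    ((cauchySeq_of_le_geometric _ _ hkm hda).prodMk (cauchySeq_of_le_geometric _ _ hkm hdb))
  -- `c n = b (n + 1)`, so the `F₂`-side sequence has the same limit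
  have hP' : Tendsto (fun n => ((f n).1, (f n).2.2)) atTop (𝓝 P) := by
    simp_rw [← fun n => (hfR n).1]
    exact hP.fst_nhds.prodMk_nhds (hP.snd_nhds.comp (tendsto_add_atTop_nat 1))
  have hP₂ : P ∈ {p : X × Y | p.2 ∈ F₂ p.1} ∩ U ×ˢ V :=
    hc₂.mem_of_tendsto hP' (Eventually.of_forall fun n =>
      ⟨(hf n).mem₂, hU' n, (hfR n).1 ▸ hV' (n + 1)⟩)
  refine ⟨P.1, ⟨P.2, hP₁.1, hP₂.1⟩, ?_⟩
  have := dist_le_of_le_geometric_of_tendsto₀ _ _ hkm hda hP.fst_nhds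
  rwa [hf₀] at this

theorem infEDist_coincidence_le_of_setDist2_le {x₀ : X} {y₀ : Y} {ρ β e : ℝ}
    (hreg : MetricallyRegularOn F₁ l (closedBall x₀ ρ) (closedBall y₀ ρ))
    (hAub : AubinOn F₂ m (closedBall x₀ ρ) (closedBall y₀ ρ))
    (hc₁ : IsComplete ({p : X × Y | p.2 ∈ F₁ p.1} ∩ closedBall x₀ ρ ×ˢ closedBall y₀ ρ))
    (hc₂ : IsClosed ({p : X × Y | p.2 ∈ F₂ p.1} ∩ closedBall x₀ ρ ×ˢ closedBall y₀ ρ))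
    (hl : 0 ≤ l) (hm : 0 < m) (hlm : l * m < 1) (he : 0 ≤ e)
    (hxe : setDist2 (F₁ x ∩ ball y₀ β) (F₂ x) ≤ ENNReal.ofReal e)
    (hx : dist x x₀ + l * e / (1 - l * m) < ρ) (hβ : β + e / (1 - l * m) < ρ) :
    infEDist x {z | (F₁ z ∩ F₂ z).Nonempty} ≤ ENNReal.ofReal (l * e / (1 - l * m)) := by
  have hden : 1 - l * m ≠ 0 := by linarith
  have hq : Tendsto (fun δ : ℝ => (l + δ) * m) (𝓝 0) (𝓝 (l * m)) := by
    simpa using (show ContinuousAt (fun δ : ℝ => (l + δ) * m) 0 by fun_prop).tendsto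
  have hradx : Tendsto (fun δ : ℝ => (l + δ) * (e + δ) / (1 - (l + δ) * m)) (𝓝 0)
      (𝓝 (l * e / (1 - l * m))) := by
    have : ContinuousAt (fun δ : ℝ => (l + δ) * (e + δ) / (1 - (l + δ) * m)) 0 :=
      ContinuousAt.div (by fun_prop) (by fun_prop) (by simpa using hden)
    simpa using this.tendsto
  have hrady : Tendsto (fun δ : ℝ => (e + δ) / (1 - (l + δ) * m)) (𝓝 0)
      (𝓝 (e / (1 - l * m))) := by
    have : ContinuousAt (fun δ : ℝ => (e + δ) / (1 - (l + δ) * m)) 0 :=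
      ContinuousAt.div (by fun_prop) (by fun_prop) (by simpa using hden)
    simpa using this.tendsto
  refine ge_of_tendsto
    ((ENNReal.tendsto_ofReal hradx).mono_left (nhdsWithin_le_nhds (s := Ioi 0))) ?_
  filter_upwards [self_mem_nhdsWithin, nhdsWithin_le_nhds (hq.eventually (gt_mem_nhds hlm)),
    nhdsWithin_le_nhds (hradx.eventually (gt_mem_nhds (lt_sub_iff_add_lt'.2 hx))),
    nhdsWithin_le_nhds (hrady.eventually (gt_mem_nhds (lt_sub_iff_add_lt'.2 hβ)))]
    with δ (hδ : 0 < δ) hkm hδx hδy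
  obtain ⟨y, ⟨hy, hyβ⟩, c, hc, hyc⟩ := exists_dist_lt_of_setDist2_lt <|
    hxe.trans_lt ((ENNReal.ofReal_lt_ofReal_iff (by linarith)).2 (lt_add_of_pos_right e hδ))
  obtain ⟨z, hz, hxz⟩ := exists_coincidence_dist_le hreg hAub hc₁ hc₂ hl hm
    (lt_add_of_pos_right l hδ) hkm (dist_nonneg.trans_lt hyc)
    (closedBall_subset_closedBall' (by linarith))
    (closedBall_subset_closedBall' (by linarith [mem_ball.1 hyβ])) hy hc hyc.le
  calc infEDist x {z | (F₁ z ∩ F₂ z).Nonempty} ≤ edist x z := infEDist_le_edist_of_mem hz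
    _ ≤ _ := by rw [edist_dist]; exact ENNReal.ofReal_le_ofReal hxz

theorem infEDist_coincidence_le {x₀ : X} {y₀ : Y} {ρ : ℝ}
    (hreg : MetricallyRegularOn F₁ l (closedBall x₀ ρ) (closedBall y₀ ρ))
    (hAub : AubinOn F₂ m (closedBall x₀ ρ) (closedBall y₀ ρ))
    (hc₁ : IsComplete ({p : X × Y | p.2 ∈ F₁ p.1} ∩ closedBall x₀ ρ ×ˢ closedBall y₀ ρ))
    (hc₂ : IsClosed ({p : X × Y | p.2 ∈ F₂ p.1} ∩ closedBall x₀ ρ ×ˢ closedBall y₀ ρ))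
    (hl : 0 < l) (hm : 0 < m) (hlm : l * m < 1) (h₁ : y₀ ∈ F₁ x₀) (h₂ : y₀ ∈ F₂ x₀)
    (hx : dist x x₀ < min (ρ / 2) (l * ρ / 2)) :
    infEDist x {z | (F₁ z ∩ F₂ z).Nonempty} ≤
      ENNReal.ofReal (l⁻¹ - m)⁻¹ * setDist2 (F₁ x ∩ ball y₀ (ρ / 2)) (F₂ x) := by
  set ε := setDist2 (F₁ x ∩ ball y₀ (ρ / 2)) (F₂ x)
  have hs : 0 < 1 - l * m := by linarith
  have hK : (l⁻¹ - m)⁻¹ = l / (1 - l * m) := by field_simp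
  rw [hK]
  rcases le_or_gt (edist x x₀) (ENNReal.ofReal (l / (1 - l * m)) * ε) with hle | hlt
  · have hx₀ : x₀ ∈ {z | (F₁ z ∩ F₂ z).Nonempty} := ⟨y₀, h₁, h₂⟩
    exact (infEDist_le_edist_of_mem hx₀).trans hle
  have hε : ε = ENNReal.ofReal ε.toReal := by
    refine (ENNReal.ofReal_toReal fun h => ?_).symm
    rw [h, ENNReal.mul_top (by simp [hl, hs])] at hlt
    exact not_top_lt hlt
  set e := ε.toReal
  rw [hε, ← ENNReal.ofReal_mul (by positivity), edist_dist,
    ENNReal.ofReal_lt_ofReal_iff_of_nonneg (by positivity)] at hlt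
  rw [hε, ← ENNReal.ofReal_mul (by positivity), div_mul_eq_mul_div]
  have hle : e / (1 - l * m) < ρ / 2 := by
    rw [← mul_lt_mul_iff_of_pos_left hl, mul_div_assoc', ← div_mul_eq_mul_div]
    linarith [min_le_right (ρ / 2) (l * ρ / 2)]
  refine infEDist_coincidence_le_of_setDist2_le hreg hAub hc₁ hc₂ hl.le hm hlm
    ENNReal.toReal_nonneg hε.le ?_ (by linarith)
  linarith [min_le_left (ρ / 2) (l * ρ / 2), div_mul_eq_mul_div l (1 - l * m) e]

end SetValued

theorem stmt9 {X Y : Type*} [MetricSpace X] [NormedAddCommGroup Y]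
    (F₁ F₂ : X → Set Y) (x₀ : X) (y₀ : Y)
    (h1 : y₀ ∈ F₁ x₀) (h2 : y₀ ∈ F₂ x₀)
    (l m : ℝ) (hl : 0 < l) (hm : 0 < m) (hlm : l * m < 1)
    (hcomp1 : ∃ r > (0:ℝ),
      IsComplete ({p : X × Y | p.2 ∈ F₁ p.1} ∩ Metric.closedBall (x₀, y₀) r))
    (hcomp2 : ∃ r > (0:ℝ),
      IsComplete ({p : X × Y | p.2 ∈ F₂ p.1} ∩ Metric.closedBall (x₀, y₀) r))
    (hreg : ∃ U ∈ 𝓝 x₀, ∃ V ∈ 𝓝 y₀, ∀ x ∈ U, ∀ y ∈ V,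
      EMetric.infEdist x {x' | y ∈ F₁ x'} ≤
        ENNReal.ofReal l * EMetric.infEdist y (F₁ x))
    (hAub : ∃ U ∈ 𝓝 x₀, ∃ V ∈ 𝓝 y₀, ∀ x ∈ U, ∀ u ∈ U,
      exc (F₂ x ∩ V) (F₂ u) ≤ ENNReal.ofReal (m * dist x u)) :
    ∃ α > (0:ℝ), ∃ β > (0:ℝ), ∀ x ∈ Metric.ball x₀ α,
      EMetric.infEdist x {x' | (F₁ x' ∩ F₂ x').Nonempty} ≤
        ENNReal.ofReal (l⁻¹ - m)⁻¹ *
          setDist2 (F₁ x ∩ Metric.ball y₀ β) (F₂ x) := by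
  obtain ⟨r₁, hr₁, hc₁⟩ := hcomp1
  obtain ⟨r₂, hr₂, hc₂⟩ := hcomp2
  obtain ⟨U₁, hU₁, V₁, hV₁, hreg⟩ := hreg
  obtain ⟨U₂, hU₂, V₂, hV₂, hAub⟩ := hAub
  obtain ⟨ρ, ⟨hρU, hρV, hρ₁, hρ₂⟩, hρ⟩ : ∃ ρ, (closedBall x₀ ρ ⊆ U₁ ∩ U₂ ∧
      closedBall y₀ ρ ⊆ V₁ ∩ V₂ ∧ ρ ≤ r₁ ∧ ρ ≤ r₂) ∧ 0 < ρ :=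
    ((((eventually_closedBall_subset (inter_mem hU₁ hU₂)).and <|
      (eventually_closedBall_subset (inter_mem hV₁ hV₂)).and <|
        (eventually_le_nhds hr₁).and (eventually_le_nhds hr₂)).filter_mono
          nhdsWithin_le_nhds).and (self_mem_nhdsWithin (s := Ioi 0))).exists
  have hloc : ∀ {F : X → Set Y} {r : ℝ}, ρ ≤ r →
      IsComplete ({p : X × Y | p.2 ∈ F p.1} ∩ closedBall (x₀, y₀) r) →
      IsComplete ({p : X × Y | p.2 ∈ F p.1} ∩ closedBall x₀ ρ ×ˢ closedBall y₀ ρ) :=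
    fun hρr hc => closedBall_prod_same x₀ y₀ ρ ▸ hc.inter_closedBall_of_le hρr
  refine ⟨min (ρ / 2) (l * ρ / 2), by positivity, ρ / 2, by positivity, fun x hx => ?_⟩
  exact infEDist_coincidence_le
    (MetricallyRegularOn.mono hreg (hρU.trans inter_subset_left) (hρV.trans inter_subset_left))
    (AubinOn.mono hAub (hρU.trans inter_subset_right) (hρV.trans inter_subset_right))
    (hloc hρ₁ hc₁) (hloc hρ₂ hc₂).isClosed hl hm hlm h1 h2 (mem_ball.1 hx)
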